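/- arXiv:1610.03705 — 2 statements merged into one kernel-verified Lean document; each statement's English description precedes it below -/
import Mathlib

section
/- For all integers m ≥ 1 and 0 ≤ i ≤ t, every vertex that is added to the Koch network at step i has degree 2(m+1)^{t-i} in K_{m,t}. -/
/-- The triangles of the Koch network `K_{m,t}`: at step `t+1`, each old triangle survives and
each (triangle, corner, group) creates a new triangle. -/
def KochTri (m : ℕ) : ℕ → Type
  | 0 => Unit
  | t+1 => KochTri m t ⊕ (KochTri m t × Fin 3 × Fin m)

/-- The vertices of the Koch network `K_{m,t}`: at step `t+1`, each (triangle, corner, group)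
creates two new vertices. -/
def KochVertex (m : ℕ) : ℕ → Type
  | 0 => Fin 3
  | t+1 => KochVertex m t ⊕ (KochTri m t × Fin 3 × Fin m × Fin 2)

/-- The three corner vertices of each triangle. -/
def KochCorner (m : ℕ) : ∀ t, KochTri m t → Fin 3 → KochVertex m t
  | 0, _, i => i
  | t+1, Sum.inl τ, i => Sum.inl (KochCorner m t τ i)
  | t+1, Sum.inr (τ, c, g), i =>
      ![Sum.inl (KochCorner m t τ c), Sum.inr (τ, c, g, 0), Sum.inr (τ, c, g, 1)] i

instance KochTri.instDecidableEq (m : ℕ) : ∀ t, DecidableEq (KochTri m t)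
  | 0 => inferInstanceAs (DecidableEq Unit)
  | t+1 =>
    letI := KochTri.instDecidableEq m t
    inferInstanceAs (DecidableEq (KochTri m t ⊕ (KochTri m t × Fin 3 × Fin m)))

instance KochVertex.instDecidableEq (m : ℕ) : ∀ t, DecidableEq (KochVertex m t)
  | 0 => inferInstanceAs (DecidableEq (Fin 3))
  | t+1 =>
    letI := KochVertex.instDecidableEq m t
    letI := KochTri.instDecidableEq m t
    inferInstanceAs (DecidableEq (KochVertex m t ⊕ (KochTri m t × Fin 3 × Fin m × Fin 2)))

instance KochTri.instFintype (m : ℕ) : ∀ t, Fintype (KochTri m t)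
  | 0 => inferInstanceAs (Fintype Unit)
  | t+1 =>
    letI := KochTri.instFintype m t
    inferInstanceAs (Fintype (KochTri m t ⊕ (KochTri m t × Fin 3 × Fin m)))

instance KochVertex.instFintype (m : ℕ) : ∀ t, Fintype (KochVertex m t)
  | 0 => inferInstanceAs (Fintype (Fin 3))
  | t+1 =>
    letI := KochVertex.instFintype m t
    letI := KochTri.instFintype m t
    inferInstanceAs (Fintype (KochVertex m t ⊕ (KochTri m t × Fin 3 × Fin m × Fin 2)))

/-- The Koch network `K_{m,t}`: two distinct vertices are adjacent iff they are corners of a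
common triangle. -/
def KochGraph (m t : ℕ) : SimpleGraph (KochVertex m t) where
  Adj u v := u ≠ v ∧ ∃ (τ : KochTri m t) (i j : Fin 3),
      KochCorner m t τ i = u ∧ KochCorner m t τ j = v
  symm := by constructor; rintro u v ⟨hne, τ, i, j, hi, hj⟩; exact ⟨hne.symm, τ, j, i, hj, hi⟩
  loopless := by constructor; rintro u ⟨hne, -⟩; exact hne rfl

instance (m t : ℕ) : DecidableRel (KochGraph m t).Adj := fun u v =>
  inferInstanceAs (Decidable (u ≠ v ∧ ∃ (τ : KochTri m t) (i j : Fin 3),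
      KochCorner m t τ i = u ∧ KochCorner m t τ j = v))

/-- The step at which a vertex of `K_{m,t}` was added (initial vertices are added at step 0). -/
def KochBirth (m : ℕ) : ∀ t, KochVertex m t → ℕ
  | 0, _ => 0
  | t+1, Sum.inl v => KochBirth m t v
  | t+1, Sum.inr _ => t+1

/-- The canonical inclusion of `K_{m,t}` into `K_{m,t+1}`. -/
def KochInl (m t : ℕ) (v : KochVertex m t) : KochVertex m (t+1) := Sum.inl v

/-- The other member of the group of two with which a (non-initial) vertex was added. -/
def KochSibling (m : ℕ) : ∀ t, KochVertex m t → KochVertex m t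
  | 0, v => v
  | t+1, Sum.inl v => Sum.inl (KochSibling m t v)
  | t+1, Sum.inr (τ, c, g, p) => Sum.inr (τ, c, g, if p = 0 then 1 else 0)

/-- The father vertex of a (non-initial) vertex: the existing vertex to which its group of two
was attached. -/
def KochFather (m : ℕ) : ∀ t, KochVertex m t → KochVertex m t
  | 0, v => v
  | t+1, Sum.inl v => Sum.inl (KochFather m t v)
  | t+1, Sum.inr (τ, c, _, _) => Sum.inl (KochCorner m t τ c)
/-!
Count, for every vertex `v` of `K_{m,t}`, the pairs (triangle, corner index) at which `v` sits.
Each such pair yields `2m` new neighbours and `m` new triangles at `v` in the next step, while a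
newborn vertex lies on a single triangle and is adjacent to its father and its sibling only.
Hence the degree is always twice the corner count, and the corner count, equal to `1` at birth,
is multiplied by `m + 1` at every later step.
-/

open Finset

lemma card_filter_prodAssoc {α β γ : Type*} [Fintype α] [Fintype β] [Fintype γ]
    (p : α × β → Prop) [DecidablePred p] :
    #{x : α × β × γ | p (x.1, x.2.1)} = #{x : α × β | p x} * Fintype.card γ := by
  rw [← card_univ, ← card_product, ← filter_product_left]
  exact card_equiv (Equiv.prodAssoc α β γ).symm (by simp)

def KochInr (m t : ℕ) (q : KochTri m t × Fin 3 × Fin m × Fin 2) : KochVertex m (t+1) :=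
  Sum.inr q

def KochCornerCount (m t : ℕ) (v : KochVertex m t) : ℕ :=
  #{p : KochTri m t × Fin 3 | KochCorner m t p.1 p.2 = v}

section

variable {m t : ℕ}

@[simp] lemma kochInl_inj {u v : KochVertex m t} : KochInl m t u = KochInl m t v ↔ u = v :=
  Sum.inl_injective.eq_iff

@[simp] lemma kochInr_inj {q q' : KochTri m t × Fin 3 × Fin m × Fin 2} :
    KochInr m t q = KochInr m t q' ↔ q = q' :=
  Sum.inr_injective.eq_iff

@[simp] lemma kochInl_ne_kochInr (u : KochVertex m t) (q : KochTri m t × Fin 3 × Fin m × Fin 2) :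
    KochInl m t u ≠ KochInr m t q :=
  Sum.inl_ne_inr

@[simp] lemma kochInr_ne_kochInl (q : KochTri m t × Fin 3 × Fin m × Fin 2) (u : KochVertex m t) :
    KochInr m t q ≠ KochInl m t u :=
  Sum.inr_ne_inl

@[simp] lemma kochTri_succ_inr_inj {x y : KochTri m t × Fin 3 × Fin m} :
    @Eq (KochTri m (t+1)) (Sum.inr x) (Sum.inr y) ↔ x = y :=
  Sum.inr_injective.eq_iff

@[elab_as_elim]
lemma KochVertex.induction {motive : ∀ t, KochVertex m t → Prop}
    (zero : ∀ v, motive 0 v)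
    (kochInl : ∀ t u, motive t u → motive (t+1) (KochInl m t u))
    (kochInr : ∀ t q, motive (t+1) (KochInr m t q)) :
    ∀ t v, motive t v
  | 0, v => zero v
  | t+1, Sum.inl u => kochInl t u (KochVertex.induction zero kochInl kochInr t u)
  | _+1, Sum.inr q => kochInr _ q

lemma KochVertex.card_filter_succ (P : KochVertex m (t+1) → Prop) [DecidablePred P] :
    #{w | P w} = #{u | P (KochInl m t u)} + #{q | P (KochInr m t q)} := by
  simp only [card_filter]
  exact Fintype.sum_sum_type _

lemma KochTri.sum_prod_succ (f : KochTri m (t+1) × Fin 3 → ℕ) :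
    ∑ p, f p = ∑ p : KochTri m t × Fin 3, f (Sum.inl p.1, p.2) +
      ∑ x : KochTri m t × Fin 3 × Fin m, ∑ i, f (Sum.inr x, i) := by
  rw [Fintype.sum_prod_type, Fintype.sum_prod_type]
  exact Fintype.sum_sum_type _

@[simp] lemma kochCorner_succ_inl (τ : KochTri m t) (i : Fin 3) :
    KochCorner m (t+1) (Sum.inl τ) i = KochInl m t (KochCorner m t τ i) := rfl

@[simp] lemma kochCorner_succ_inr_zero (x : KochTri m t × Fin 3 × Fin m) :
    KochCorner m (t+1) (Sum.inr x) 0 = KochInl m t (KochCorner m t x.1 x.2.1) := rfl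

@[simp] lemma kochCorner_succ_inr_one (x : KochTri m t × Fin 3 × Fin m) :
    KochCorner m (t+1) (Sum.inr x) 1 = KochInr m t (x.1, x.2.1, x.2.2, 0) := rfl

@[simp] lemma kochCorner_succ_inr_two (x : KochTri m t × Fin 3 × Fin m) :
    KochCorner m (t+1) (Sum.inr x) 2 = KochInr m t (x.1, x.2.1, x.2.2, 1) := rfl

@[simp] lemma kochFather_kochInr (q : KochTri m t × Fin 3 × Fin m × Fin 2) :
    KochFather m (t+1) (KochInr m t q) = KochInl m t (KochCorner m t q.1 q.2.1) := rfl

@[simp] lemma kochSibling_kochInr (q : KochTri m t × Fin 3 × Fin m × Fin 2) :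
    KochSibling m (t+1) (KochInr m t q) = KochInr m t (q.1, q.2.1, q.2.2.1, q.2.2.2.rev) := by
  obtain ⟨τ, c, g, p⟩ := q
  fin_cases p <;> rfl

@[simp] lemma kochBirth_kochInl (u : KochVertex m t) :
    KochBirth m (t+1) (KochInl m t u) = KochBirth m t u := rfl

@[simp] lemma kochBirth_kochInr (q : KochTri m t × Fin 3 × Fin m × Fin 2) :
    KochBirth m (t+1) (KochInr m t q) = t + 1 := rfl

lemma kochBirth_le (t : ℕ) (v : KochVertex m t) : KochBirth m t v ≤ t := by
  induction t, v using KochVertex.induction with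
  | zero v => exact le_rfl
  | kochInl t u ih => exact (kochBirth_kochInl u).trans_le (ih.trans t.le_succ)
  | kochInr t q => exact (kochBirth_kochInr q).le

lemma KochGraph.adj_zero_iff (u v : KochVertex m 0) : (KochGraph m 0).Adj u v ↔ u ≠ v :=
  ⟨And.left, fun h => ⟨h, (), u, v, rfl, rfl⟩⟩

lemma KochGraph.adj_kochInl_kochInl (u v : KochVertex m t) :
    (KochGraph m (t+1)).Adj (KochInl m t u) (KochInl m t v) ↔ (KochGraph m t).Adj u v := by
  constructor
  · rintro ⟨hne, (τ | ⟨τ, c, g⟩), i, j, hi, hj⟩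
    · exact ⟨fun h => hne (h ▸ rfl), τ, i, j, kochInl_inj.mp hi, kochInl_inj.mp hj⟩
    · fin_cases i <;> fin_cases j <;> simp_all
  · rintro ⟨hne, τ, i, j, rfl, rfl⟩
    exact ⟨by simpa using hne, Sum.inl τ, i, j, rfl, rfl⟩

lemma KochGraph.adj_kochInl_kochInr (u : KochVertex m t)
    (q : KochTri m t × Fin 3 × Fin m × Fin 2) :
    (KochGraph m (t+1)).Adj (KochInl m t u) (KochInr m t q) ↔ KochCorner m t q.1 q.2.1 = u := by
  obtain ⟨τ, c, g, p⟩ := q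
  constructor
  · rintro ⟨-, (σ | ⟨σ, c', g'⟩), i, j, hi, hj⟩
    · exact (kochInl_ne_kochInr (KochCorner m t σ j) _ hj).elim
    · fin_cases i <;> fin_cases j <;> simp_all [Prod.ext_iff]
  · rintro rfl
    refine ⟨kochInl_ne_kochInr _ _, Sum.inr (τ, c, g), 0, p.succ, rfl, ?_⟩
    fin_cases p <;> rfl

lemma KochGraph.adj_kochInr_iff (q : KochTri m t × Fin 3 × Fin m × Fin 2)
    (w : KochVertex m (t+1)) :
    (KochGraph m (t+1)).Adj (KochInr m t q) w ↔
      w = KochFather m (t+1) (KochInr m t q) ∨ w = KochSibling m (t+1) (KochInr m t q) := by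
  obtain ⟨τ, c, g, p⟩ := q
  constructor
  · rintro ⟨hne, (σ | ⟨σ, c', g'⟩), i, j, hi, rfl⟩
    · exact (kochInl_ne_kochInr (KochCorner m t σ i) _ hi).elim
    · fin_cases i <;> fin_cases j <;> fin_cases p <;> simp_all [Prod.ext_iff]
  · rintro (rfl | rfl)
    · refine ⟨(kochInl_ne_kochInr _ _).symm, Sum.inr (τ, c, g), p.succ, 0, ?_, rfl⟩
      fin_cases p <;> rfl
    · refine ⟨?_, Sum.inr (τ, c, g), p.succ, p.rev.succ, ?_, ?_⟩ <;> fin_cases p <;> simp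

lemma kochCornerCount_zero (v : KochVertex m 0) : KochCornerCount m 0 v = 1 :=
  card_eq_one.mpr ⟨((), v), by
    ext ⟨⟨⟩, i⟩
    simp only [mem_filter_univ, mem_singleton]
    exact ⟨fun h => by subst h; rfl, congrArg Prod.snd⟩⟩

lemma kochCornerCount_kochInl (u : KochVertex m t) :
    KochCornerCount m (t+1) (KochInl m t u) = (m + 1) * KochCornerCount m t u := by
  rw [KochCornerCount, card_filter, KochTri.sum_prod_succ]
  simp only [Fin.sum_univ_three, kochCorner_succ_inl, kochCorner_succ_inr_zero,
    kochCorner_succ_inr_one, kochCorner_succ_inr_two, kochInl_inj, kochInr_ne_kochInl,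
    if_false, add_zero]
  rw [← card_filter, ← card_filter, ← KochCornerCount, card_filter_prodAssoc
    (fun p : KochTri m t × Fin 3 => KochCorner m t p.1 p.2 = u), ← KochCornerCount,
    Fintype.card_fin]
  ring

lemma kochCornerCount_kochInr (q : KochTri m t × Fin 3 × Fin m × Fin 2) :
    KochCornerCount m (t+1) (KochInr m t q) = 1 := by
  obtain ⟨τ, c, g, p⟩ := q
  refine card_eq_one.mpr ⟨(Sum.inr (τ, c, g), p.succ), ?_⟩
  ext ⟨σ | ⟨σ, c', g'⟩, i⟩ <;> fin_cases i <;> fin_cases p <;> simp [Prod.ext_iff]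

lemma kochCornerCount_eq_pow (t : ℕ) (v : KochVertex m t) :
    KochCornerCount m t v = (m + 1) ^ (t - KochBirth m t v) := by
  induction t, v using KochVertex.induction with
  | zero v => exact kochCornerCount_zero v
  | kochInl t u ih =>
    rw [kochCornerCount_kochInl, ih, kochBirth_kochInl, Nat.succ_sub (kochBirth_le t u),
      pow_succ']
  | kochInr t q => rw [kochCornerCount_kochInr, kochBirth_kochInr, Nat.sub_self, pow_zero]

namespace KochGraph

open SimpleGraph

lemma degree_zero (v : KochVertex m 0) : (KochGraph m 0).degree v = 2 := by
  have h : (KochGraph m 0).neighborFinset v = {v}ᶜ := by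
    ext w
    simp [adj_zero_iff, ne_comm]
  rw [← card_neighborFinset_eq_degree, h, card_compl, card_singleton]
  rfl

lemma degree_kochInl (u : KochVertex m t) :
    (KochGraph m (t+1)).degree (KochInl m t u) =
      (KochGraph m t).degree u + 2 * m * KochCornerCount m t u := by
  rw [← card_neighborFinset_eq_degree, neighborFinset_eq_filter, KochVertex.card_filter_succ]
  simp only [adj_kochInl_kochInl, adj_kochInl_kochInr]
  rw [← neighborFinset_eq_filter, card_neighborFinset_eq_degree, card_filter_prodAssoc
    (fun p : KochTri m t × Fin 3 => KochCorner m t p.1 p.2 = u), ← KochCornerCount,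
    Fintype.card_prod, Fintype.card_fin, Fintype.card_fin]
  ring

lemma degree_kochInr (q : KochTri m t × Fin 3 × Fin m × Fin 2) :
    (KochGraph m (t+1)).degree (KochInr m t q) = 2 := by
  have h : (KochGraph m (t+1)).neighborFinset (KochInr m t q) =
      {KochFather m (t+1) (KochInr m t q), KochSibling m (t+1) (KochInr m t q)} := by
    ext w
    simp [adj_kochInr_iff]
  rw [← card_neighborFinset_eq_degree, h, card_pair (by simp)]

lemma degree_eq_two_mul_kochCornerCount (t : ℕ) (v : KochVertex m t) :
    (KochGraph m t).degree v = 2 * KochCornerCount m t v := by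
  induction t, v using KochVertex.induction with
  | zero v => rw [degree_zero, kochCornerCount_zero]
  | kochInl t u ih => rw [degree_kochInl, kochCornerCount_kochInl, ih]; ring
  | kochInr t q => rw [degree_kochInr, kochCornerCount_kochInr]

end KochGraph

end

theorem koch_degree_of_birth_general (m i t : ℕ)
    (v : KochVertex m t) (hv : KochBirth m t v = i) :
    (KochGraph m t).degree v = 2 * (m + 1) ^ (t - i) := by
  rw [KochGraph.degree_eq_two_mul_kochCornerCount, kochCornerCount_eq_pow, hv]

/-- For all integers m ≥ 1 and 0 ≤ i ≤ t, every vertex that is added to the Koch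
network at step i has degree `2(m+1)^(t-i)` in `K_{m,t}`. -/
theorem koch_degree_of_birth (m i t : ℕ) (hm : 1 ≤ m) (hit : i ≤ t)
    (v : KochVertex m t) (hv : KochBirth m t v = i) :
    (KochGraph m t).degree v = 2 * (m + 1) ^ (t - i) :=
  koch_degree_of_birth_general m i t v hv
end

section
/- For all integers m ≥ 1 and t ≥ 1, every vertex v of the Koch network K_{m,t} that is not an initial vertex has exactly one neighbor whose degree equals the degree of v, namely the other vertex of the group of two with which v was added. -/
/-!
Two distinct triangles of the Koch network share at most one vertex, so the neighbours of a
vertex `v` come in pairs, one pair for each triangle through `v`: the degree of `v` is twice the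
number of those triangles. Each step multiplies the number of triangles through an existing
vertex by `m + 1`, so a vertex added at step `s` has degree `2 (m + 1) ^ (t - s)` in `K_{m,t}`,
and for `m ≥ 1` the degree determines the step of birth. A neighbour of `v` added at the same
step as `v` lies in the triangle in which `v` was created, hence is its sibling.
-/

namespace KochGraph

variable {m : ℕ}

-- Injectivity of the constructors at the types `KochVertex m (t+1)` and `KochTri m (t+1)`,
-- which `simp` does not see as sum types.
@[simp]
theorem kochVertex_inl_inj {t} {v w : KochVertex m t} :
    @Eq (KochVertex m (t+1)) (Sum.inl v) (Sum.inl w) ↔ v = w :=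
  Sum.inl_injective.eq_iff

@[simp]
theorem kochVertex_inr_inj {t} {x y : KochTri m t × Fin 3 × Fin m × Fin 2} :
    @Eq (KochVertex m (t+1)) (Sum.inr x) (Sum.inr y) ↔ x = y :=
  Sum.inr_injective.eq_iff

@[simp]
theorem kochTri_inr_inj {t} {x y : KochTri m t × Fin 3 × Fin m} :
    @Eq (KochTri m (t+1)) (Sum.inr x) (Sum.inr y) ↔ x = y :=
  Sum.inr_injective.eq_iff

theorem kochCorner_injective : ∀ {t} (τ : KochTri m t), Function.Injective (KochCorner m t τ)
  | 0, _ => fun _ _ h => h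
  | _+1, Sum.inl τ => fun _ _ h => kochCorner_injective τ (Sum.inl.inj h)
  | _+1, Sum.inr _ => by
      intro i j h
      fin_cases i <;> fin_cases j <;> simp_all [KochCorner]

theorem kochCorner_inr_eq_inl_iff {t} {σ : KochTri m t} {c : Fin 3} {g : Fin m} {i : Fin 3}
    {w : KochVertex m t} :
    KochCorner m (t+1) (Sum.inr (σ, c, g)) i = Sum.inl w ↔
      i = 0 ∧ KochCorner m t σ c = w := by
  fin_cases i <;> simp [KochCorner]

theorem kochCorner_eq_inr_iff {t} {τ : KochTri m (t+1)} {i : Fin 3} {σ : KochTri m t}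
    {c : Fin 3} {g : Fin m} {p : Fin 2} :
    KochCorner m (t+1) τ i = Sum.inr (σ, c, g, p) ↔ τ = Sum.inr (σ, c, g) ∧ i = p.succ := by
  rcases τ with τ | ⟨σ', c', g'⟩
  · simp [KochCorner]
  · fin_cases i <;> fin_cases p <;> simp [KochCorner, eq_comm]

theorem kochTri_eq_inr_of_corner_eq {t} {x : KochTri m t × Fin 3 × Fin m}
    {τ : KochTri m (t+1)} {i j i' j' : Fin 3} (hij : i ≠ j)
    (hi : KochCorner m (t+1) (Sum.inr x) i = KochCorner m (t+1) τ i')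
    (hj : KochCorner m (t+1) (Sum.inr x) j = KochCorner m (t+1) τ j') : τ = Sum.inr x := by
  -- the corners `1, 2` of `inr x` are the two vertices created with it, on no other triangle
  have of_ne_zero : ∀ k k', k ≠ 0 →
      KochCorner m (t+1) (Sum.inr x) k = KochCorner m (t+1) τ k' → τ = Sum.inr x := by
    intro k k' hk h
    obtain ⟨p, rfl⟩ := Fin.exists_succ_eq.2 hk
    obtain ⟨σ, c, g⟩ := x
    exact (kochCorner_eq_inr_iff.1 (h.symm.trans (kochCorner_eq_inr_iff.2 ⟨rfl, rfl⟩))).1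
  by_cases hi0 : i = 0
  · exact of_ne_zero j j' (hi0 ▸ hij.symm) hj
  · exact of_ne_zero i i' hi0 hi

theorem kochTri_eq_of_corner_eq : ∀ {t} {τ τ' : KochTri m t} {i j i' j' : Fin 3}, i ≠ j →
    KochCorner m t τ i = KochCorner m t τ' i' → KochCorner m t τ j = KochCorner m t τ' j' →
    τ = τ'
  | 0, _, _, _, _, _, _, _, _, _ => rfl
  | _+1, Sum.inl _, Sum.inl _, _, _, _, _, hij, hi, hj =>
      congrArg Sum.inl (kochTri_eq_of_corner_eq hij (Sum.inl.inj hi) (Sum.inl.inj hj))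
  | _+1, Sum.inr _, _, _, _, _, _, hij, hi, hj => (kochTri_eq_inr_of_corner_eq hij hi hj).symm
  | _+1, τ, Sum.inr _, _, _, _, _, hij, hi, hj =>
      kochTri_eq_inr_of_corner_eq (fun h => hij (kochCorner_injective τ (by rw [hi, hj, h])))
        hi.symm hj.symm

open Finset

-- By `kochCorner_injective`, these pairs `(τ, i)` correspond to the triangles `τ` through `v`.
def kochIncidences (m t : ℕ) (v : KochVertex m t) : Finset (KochTri m t × Fin 3) :=
  univ.filter fun p => KochCorner m t p.1 p.2 = v

theorem degree_eq_two_mul_card_kochIncidences {t} (v : KochVertex m t) :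
    (KochGraph m t).degree v = 2 * #(kochIncidences m t v) := by
  have neighbors : (KochGraph m t).neighborFinset v = (kochIncidences m t v).biUnion
      fun p => (univ.erase p.2).image (KochCorner m t p.1) := by
    ext u
    simp only [SimpleGraph.mem_neighborFinset, mem_biUnion, kochIncidences, mem_filter,
      mem_univ, true_and, mem_image, mem_erase, Prod.exists]
    constructor
    · rintro ⟨hne, τ, i, j, rfl, rfl⟩
      exact ⟨τ, i, rfl, j, ⟨fun h => hne (by rw [h]), trivial⟩, rfl⟩
    · rintro ⟨τ, i, rfl, j, ⟨hji, -⟩, rfl⟩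
      exact ⟨fun h => hji (kochCorner_injective τ h.symm), τ, i, j, rfl, rfl⟩
  rw [← SimpleGraph.card_neighborFinset_eq_degree, neighbors, card_biUnion, mul_comm,
    ← smul_eq_mul, ← sum_const]
  · refine sum_congr rfl fun p _ => ?_
    rw [card_image_of_injective _ (kochCorner_injective p.1), card_erase_of_mem (mem_univ _)]
    rfl
  · rintro ⟨τ, i⟩ hτ ⟨τ', i'⟩ hτ' hne
    simp only [Function.onFun, disjoint_left, mem_image, mem_erase, not_exists, not_and]
    rintro _ ⟨j, ⟨hji, -⟩, rfl⟩ j' ⟨-, -⟩ hj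
    simp only [kochIncidences, coe_filter, mem_univ, true_and, Set.mem_ofPred_eq] at hτ hτ'
    obtain rfl := kochTri_eq_of_corner_eq (Ne.symm hji) (hτ.trans hτ'.symm) hj.symm
    exact hne (by rw [kochCorner_injective τ (hτ.trans hτ'.symm)])

-- `Fintype.sum_sum_type`, which does not apply syntactically to `KochTri m (t+1)`.
theorem sum_kochTri_succ {M : Type*} [AddCommMonoid M] {t} (f : KochTri m (t+1) → M) :
    ∑ τ, f τ = ∑ σ, f (Sum.inl σ) + ∑ x, f (Sum.inr x) :=
  Fintype.sum_sum_type f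

theorem card_kochIncidences_inl {t} (w : KochVertex m t) :
    #(kochIncidences m (t+1) (Sum.inl w)) = (m+1) * #(kochIncidences m t w) := by
  simp only [kochIncidences, card_filter, Fintype.sum_prod_type]
  rw [sum_kochTri_succ]
  simp only [kochCorner_inr_eq_inl_iff, ite_and, Fintype.sum_prod_type]
  simp only [KochCorner, kochVertex_inl_inj]
  simp only [Fintype.sum_ite_eq', sum_const, card_univ, Fintype.card_fin, smul_eq_mul, ← mul_sum]
  ring

theorem card_kochIncidences_inr {t} (x : KochTri m t × Fin 3 × Fin m × Fin 2) :
    #(kochIncidences m (t+1) (Sum.inr x)) = 1 := by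
  obtain ⟨σ, c, g, p⟩ := x
  rw [card_eq_one]
  refine ⟨(Sum.inr (σ, c, g), p.succ), ?_⟩
  ext ⟨τ, i⟩
  simp [kochIncidences, kochCorner_eq_inr_iff, Prod.ext_iff]

theorem kochBirth_le : ∀ {t} (v : KochVertex m t), KochBirth m t v ≤ t
  | 0, _ => le_rfl
  | _+1, Sum.inl v => (kochBirth_le v).trans (Nat.le_succ _)
  | _+1, Sum.inr _ => le_rfl

theorem card_kochIncidences : ∀ {t} (v : KochVertex m t),
    #(kochIncidences m t v) = (m+1) ^ (t - KochBirth m t v)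
  | 0, v => by
      simp only [KochBirth, Nat.sub_self, pow_zero, card_eq_one]
      refine ⟨((), v), ?_⟩
      ext ⟨τ, i⟩
      simp only [kochIncidences, mem_filter, mem_univ, true_and, mem_singleton]
      exact ⟨fun h => Prod.ext rfl h, congrArg Prod.snd⟩
  | t+1, Sum.inl w => by
      have hb := kochBirth_le w
      rw [card_kochIncidences_inl, card_kochIncidences w, KochBirth,
        show t + 1 - KochBirth m t w = t - KochBirth m t w + 1 by omega, pow_succ, mul_comm]
  | t+1, Sum.inr x => by
      rw [card_kochIncidences_inr, KochBirth, Nat.sub_self, pow_zero]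

theorem degree_eq {t} (v : KochVertex m t) :
    (KochGraph m t).degree v = 2 * (m+1) ^ (t - KochBirth m t v) := by
  rw [degree_eq_two_mul_card_kochIncidences, card_kochIncidences]

theorem degree_eq_degree_iff (hm : 1 ≤ m) {t} {u v : KochVertex m t} :
    (KochGraph m t).degree u = (KochGraph m t).degree v ↔ KochBirth m t u = KochBirth m t v := by
  have hu := kochBirth_le u
  have hv := kochBirth_le v
  rw [degree_eq, degree_eq, Nat.mul_left_cancel_iff two_pos,
    (Nat.pow_right_injective (by omega : 2 ≤ m + 1)).eq_iff]
  omega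

theorem adj_inl_inl_iff {t} {v w : KochVertex m t} :
    (KochGraph m (t+1)).Adj (Sum.inl v) (Sum.inl w) ↔ (KochGraph m t).Adj v w := by
  constructor
  · rintro ⟨hne, τ | ⟨σ, c, g⟩, i, j, hi, hj⟩
    · exact ⟨fun h => hne (by rw [h]), τ, i, j, Sum.inl.inj hi, Sum.inl.inj hj⟩
    · obtain ⟨-, rfl⟩ := kochCorner_inr_eq_inl_iff.1 hi
      obtain ⟨-, rfl⟩ := kochCorner_inr_eq_inl_iff.1 hj
      exact (hne rfl).elim
  · rintro ⟨hne, τ, i, j, hi, hj⟩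
    exact ⟨fun h => hne (Sum.inl.inj h), Sum.inl τ, i, j, congrArg Sum.inl hi,
      congrArg Sum.inl hj⟩

theorem adj_inr_inr_iff {t} {σ σ' : KochTri m t} {c c' : Fin 3} {g g' : Fin m}
    {p p' : Fin 2} :
    (KochGraph m (t+1)).Adj (Sum.inr (σ, c, g, p)) (Sum.inr (σ', c', g', p')) ↔
      (σ, c, g) = (σ', c', g') ∧ p ≠ p' := by
  constructor
  · rintro ⟨hne, τ, i, j, hi, hj⟩
    obtain ⟨rfl, -⟩ := kochCorner_eq_inr_iff.1 hi
    obtain ⟨h, -⟩ := kochCorner_eq_inr_iff.1 hj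
    obtain ⟨rfl, rfl, rfl⟩ : σ = σ' ∧ c = c' ∧ g = g' := by simpa using h
    exact ⟨rfl, fun hp => hne (by rw [hp])⟩
  · rintro ⟨h, hp⟩
    obtain ⟨rfl, rfl, rfl⟩ : σ = σ' ∧ c = c' ∧ g = g' := by simpa using h
    exact ⟨fun h => hp (by simpa using Sum.inr.inj h), Sum.inr (σ, c, g), p.succ, p'.succ,
      kochCorner_eq_inr_iff.2 ⟨rfl, rfl⟩, kochCorner_eq_inr_iff.2 ⟨rfl, rfl⟩⟩

theorem kochBirth_kochSibling : ∀ {t} (v : KochVertex m t),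
    KochBirth m t (KochSibling m t v) = KochBirth m t v
  | 0, _ => rfl
  | _+1, Sum.inl v => kochBirth_kochSibling v
  | _+1, Sum.inr _ => rfl

theorem adj_kochSibling : ∀ {t} {v : KochVertex m t}, KochBirth m t v ≠ 0 →
    (KochGraph m t).Adj v (KochSibling m t v)
  | 0, _, hv => (hv rfl).elim
  | _+1, Sum.inl _, hv => adj_inl_inl_iff.2 (adj_kochSibling hv)
  | _+1, Sum.inr (_, _, _, p), _ => adj_inr_inr_iff.2 ⟨rfl, by fin_cases p <;> decide⟩

theorem eq_kochSibling_of_adj_of_kochBirth_eq : ∀ {t} {v u : KochVertex m t},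
    (KochGraph m t).Adj v u → KochBirth m t v ≠ 0 → KochBirth m t u = KochBirth m t v →
    u = KochSibling m t v
  | 0, _, _, _, hv, _ => (hv rfl).elim
  | _+1, Sum.inl _, Sum.inl _, hadj, hv, hb =>
      congrArg Sum.inl (eq_kochSibling_of_adj_of_kochBirth_eq (adj_inl_inl_iff.1 hadj) hv hb)
  | _+1, Sum.inl v, Sum.inr _, _, _, hb => by
      have := kochBirth_le v
      simp only [KochBirth] at hb
      omega
  | _+1, Sum.inr _, Sum.inl u, _, _, hb => by
      have := kochBirth_le u
      simp only [KochBirth] at hb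
      omega
  | _+1, Sum.inr (_, _, _, p), Sum.inr (_, _, _, p'), hadj, _, _ => by
      obtain ⟨h, hp⟩ := adj_inr_inr_iff.1 hadj
      obtain ⟨rfl, rfl, rfl⟩ := by simpa using h
      obtain rfl : p' = if p = 0 then 1 else 0 := by fin_cases p <;> fin_cases p' <;> simp_all
      rfl

end KochGraph

theorem koch_equal_degree_neighbor_general (m t : ℕ) (hm : 1 ≤ m)
    (v : KochVertex m t) (hv : KochBirth m t v ≠ 0) :
    (KochGraph m t).Adj v (KochSibling m t v)
    ∧ (KochGraph m t).degree (KochSibling m t v) = (KochGraph m t).degree v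
    ∧ ∀ u : KochVertex m t, (KochGraph m t).Adj v u →
        (KochGraph m t).degree u = (KochGraph m t).degree v → u = KochSibling m t v :=
  ⟨KochGraph.adj_kochSibling hv,
    (KochGraph.degree_eq_degree_iff hm).2 (KochGraph.kochBirth_kochSibling v),
    fun _ hadj hdeg => KochGraph.eq_kochSibling_of_adj_of_kochBirth_eq hadj hv
      ((KochGraph.degree_eq_degree_iff hm).1 hdeg)⟩

/-- For all integers m ≥ 1 and t ≥ 1, every vertex v of the Koch network
`K_{m,t}` that is not an initial vertex has exactly one neighbor whose degree equals the degree
of v, namely the other vertex (`KochSibling`) of the group of two with which v was added. -/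
theorem koch_equal_degree_neighbor (m t : ℕ) (hm : 1 ≤ m) (ht : 1 ≤ t)
    (v : KochVertex m t) (hv : KochBirth m t v ≠ 0) :
    (KochGraph m t).Adj v (KochSibling m t v)
    ∧ (KochGraph m t).degree (KochSibling m t v) = (KochGraph m t).degree v
    ∧ ∀ u : KochVertex m t, (KochGraph m t).Adj v u →
        (KochGraph m t).degree u = (KochGraph m t).degree v → u = KochSibling m t v :=
  koch_equal_degree_neighbor_general m t hm v hv
end
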